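/- The superfidelity is concave in its second argument: for density matrices ρ₁, ρ₂, ρ₃ and α ∈ [0,1], G(ρ₁, α·ρ₂ + (1-α)·ρ₃) ≥ α·G(ρ₁,ρ₂) + (1-α)·G(ρ₁,ρ₃). -/

import Mathlib

/-!
On density matrices, `tr (σ * σ)` is the squared Frobenius norm of `σ` and is at most
`(tr σ) ^ 2 = 1`, so `σ ↦ √(1 - tr (σ * σ))` is `x ↦ √(1 - ‖x‖ ^ 2)` on the unit ball of a real
inner product space. The graph of the latter is the upper unit hemisphere, and its concavity comes
down to `√(1 - ‖x‖ ^ 2) * √(1 - ‖y‖ ^ 2) + ⟪x, y⟫ ≤ 1`, i.e. Cauchy–Schwarz for the unit vectors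
`(√(1 - ‖x‖ ^ 2), x)` and `(√(1 - ‖y‖ ^ 2), y)`. As `σ ↦ re tr (ρ * σ)` is linear, the
superfidelity `sG ρ` is concave on the convex set of density matrices.
-/

open Matrix ComplexOrder

noncomputable def sG {N : ℕ} (ρ σ : Matrix (Fin N) (Fin N) ℂ) : ℝ :=
  (trace (ρ * σ)).re +
    Real.sqrt (1 - (trace (ρ * ρ)).re) * Real.sqrt (1 - (trace (σ * σ)).re)

lemma sqrt_one_sub_sq_mul_add_mul_le_one {u v : ℝ} (hu : u ^ 2 ≤ 1) (hv : v ^ 2 ≤ 1) :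
    √(1 - u ^ 2) * √(1 - v ^ 2) + u * v ≤ 1 := by
  have hs := Real.sq_sqrt (sub_nonneg.2 hu)
  have ht := Real.sq_sqrt (sub_nonneg.2 hv)
  nlinarith [sq_nonneg (√(1 - u ^ 2) - √(1 - v ^ 2)), sq_nonneg (u - v)]

theorem concaveOn_sqrt_one_sub_norm_sq {F : Type*} [SeminormedAddCommGroup F]
    [InnerProductSpace ℝ F] :
    ConcaveOn ℝ (Metric.closedBall (0 : F) 1) fun x => √(1 - ‖x‖ ^ 2) := by
  refine ⟨convex_closedBall 0 1, fun x hx y hy a b ha hb hab => ?_⟩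
  rw [mem_closedBall_zero_iff] at hx hy
  have hx2 : ‖x‖ ^ 2 ≤ 1 := pow_le_one₀ (norm_nonneg x) hx
  have hy2 : ‖y‖ ^ 2 ≤ 1 := pow_le_one₀ (norm_nonneg y) hy
  have hs := Real.sq_sqrt (sub_nonneg.2 hx2)
  have ht := Real.sq_sqrt (sub_nonneg.2 hy2)
  have hnorm :
      ‖a • x + b • y‖ ^ 2 = a ^ 2 * ‖x‖ ^ 2 + 2 * (a * b) * inner ℝ x y + b ^ 2 * ‖y‖ ^ 2 := by
    rw [norm_add_sq_real, norm_smul, norm_smul, real_inner_smul_left, real_inner_smul_right,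
      Real.norm_of_nonneg ha, Real.norm_of_nonneg hb]
    ring
  have hkey : √(1 - ‖x‖ ^ 2) * √(1 - ‖y‖ ^ 2) + inner ℝ x y ≤ 1 :=
    (add_le_add_right (real_inner_le_norm x y) _).trans
      (sqrt_one_sub_sq_mul_add_mul_le_one hx2 hy2)
  have hab2 : (a + b) ^ 2 = 1 := by rw [hab, one_pow]
  apply Real.le_sqrt_of_sq_le
  rw [smul_eq_mul, smul_eq_mul, hnorm]
  nlinarith [mul_le_mul_of_nonneg_left hkey (mul_nonneg ha hb)]

namespace Matrix

variable {n : Type*} [Fintype n]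

/-- `‖vecL2 A‖` is the Frobenius norm of `A`. -/
def vecL2 : Matrix n n ℂ →ₗ[ℝ] EuclideanSpace ℂ (n × n) where
  toFun A := WithLp.toLp 2 A.vec
  map_add' _ _ := rfl
  map_smul' _ _ := rfl

lemma IsHermitian.re_trace_mul_self {A : Matrix n n ℂ} (hA : A.IsHermitian) :
    (A * A).trace.re = ‖vecL2 A‖ ^ 2 :=
  calc (A * A).trace.re = (Aᴴ * A).trace.re := by rw [hA.eq]
    _ = ‖vecL2 A‖ ^ 2 := by
      rw [← star_vec_dotProduct_vec, ← inner_self_eq_norm_sq (𝕜 := ℂ),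
        EuclideanSpace.inner_eq_star_dotProduct, dotProduct_comm]
      rfl

lemma IsHermitian.trace_mul_self {𝕜 : Type*} [RCLike 𝕜] [DecidableEq n] {A : Matrix n n 𝕜}
    (hA : A.IsHermitian) : (A * A).trace = ∑ i, (hA.eigenvalues i : 𝕜) ^ 2 := by
  conv_lhs => rw [hA.spectral_theorem, ← map_mul, Unitary.conjStarAlgAut_apply, trace_mul_cycle,
    Unitary.coe_star_mul_self, one_mul, diagonal_mul_diagonal, trace_diagonal]
  simp [sq]

lemma PosSemidef.re_trace_mul_self_le {𝕜 : Type*} [RCLike 𝕜] {A : Matrix n n 𝕜}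
    (hA : A.PosSemidef) : RCLike.re (A * A).trace ≤ RCLike.re A.trace ^ 2 := by
  classical
  rw [hA.1.trace_mul_self, hA.1.trace_eq_sum_eigenvalues]
  simp only [map_sum, ← RCLike.ofReal_pow, RCLike.ofReal_re]
  exact Finset.sum_sq_le_sq_sum_of_nonneg fun i _ => hA.eigenvalues_nonneg i

variable (n) in
def densityMatrices : Set (Matrix n n ℂ) := {ρ | ρ.PosSemidef ∧ ρ.trace = 1}

lemma convex_densityMatrices : Convex ℝ (densityMatrices n) := by
  rintro ρ ⟨hρ, htρ⟩ σ ⟨hσ, htσ⟩ a b ha hb hab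
  refine ⟨(hρ.smul ha).add (hσ.smul hb), ?_⟩
  rw [trace_add, trace_smul, trace_smul, htρ, htσ, ← Complex.coe_smul, ← Complex.coe_smul]
  simp [← Complex.ofReal_add, hab]

lemma norm_vecL2_le_one {ρ : Matrix n n ℂ} (hρ : ρ ∈ densityMatrices n) : ‖vecL2 ρ‖ ≤ 1 := by
  have h : (ρ * ρ).trace.re ≤ ρ.trace.re ^ 2 := hρ.1.re_trace_mul_self_le
  rw [hρ.1.1.re_trace_mul_self, hρ.2, Complex.one_re, one_pow] at h
  exact (sq_le_one_iff₀ (norm_nonneg _)).1 h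

lemma concaveOn_sqrt_one_sub_re_trace_mul_self :
    ConcaveOn ℝ (densityMatrices n) fun σ => √(1 - (σ * σ).trace.re) :=
  ((concaveOn_sqrt_one_sub_norm_sq.comp_linearMap vecL2).subset
    (fun _ hσ => mem_closedBall_zero_iff.2 (norm_vecL2_le_one hσ)) convex_densityMatrices).congr
    fun σ hσ => by simp [hσ.1.1.re_trace_mul_self]

end Matrix

theorem concaveOn_sG {N : ℕ} (ρ : Matrix (Fin N) (Fin N) ℂ) :
    ConcaveOn ℝ (densityMatrices (Fin N)) (sG ρ) := by
  have hlin := (Complex.reLm ∘ₗ traceLinearMap (Fin N) ℝ ℂ ∘ₗ LinearMap.mulLeft ℝ ρ).concaveOn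
    convex_densityMatrices
  exact hlin.add (concaveOn_sqrt_one_sub_re_trace_mul_self.smul (Real.sqrt_nonneg _))

theorem superfidelity_concave {N : ℕ} (ρ₁ ρ₂ ρ₃ : Matrix (Fin N) (Fin N) ℂ)
    (h₂ : ρ₂.PosSemidef) (h₃ : ρ₃.PosSemidef)
    (ht₂ : trace ρ₂ = 1) (ht₃ : trace ρ₃ = 1)
    (α : ℝ) (hα0 : 0 ≤ α) (hα1 : α ≤ 1) :
    α * sG ρ₁ ρ₂ + (1 - α) * sG ρ₁ ρ₃ ≤
      sG ρ₁ ((α : ℂ) • ρ₂ + ((1 - α : ℝ) : ℂ) • ρ₃) := by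
  have h := (concaveOn_sG ρ₁).2 ⟨h₂, ht₂⟩ ⟨h₃, ht₃⟩ hα0 (sub_nonneg.2 hα1) (add_sub_cancel α 1)
  simpa only [Complex.coe_smul, smul_eq_mul] using h
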